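/- Let C₀ > 0, c > 0, 0 < γ < 1. Suppose R, R' : ℝ² × ℝ² → ℂ are functions (of (x, ξ)) such that for every ξ with |ξ| > C₀ the functions R(·,ξ), R'(·,ξ) are in L^∞(ℝ²), sup_x |R(x,ξ) − R'(x,ξ)| ≤ c·|ξ|^{−2γ} and sup_x |R'(x,ξ)| ≤ c, and let e₀ : ℝ² × ℝ² → ℝ be positive. Define F(ξ) = ∫_{ℝ²} e^{i(x,ξ)} ( h(x, e₀(x,ξ)|1+R(x,ξ)|)(1+R(x,ξ)) − h(x, e₀(x,ξ)|1+R'(x,ξ)|)(1+R'(x,ξ)) ) dx for |ξ| > C₀, and F(ξ) = 0 for |ξ| ≤ C₀. Then for every t < 2γ − 1 one has ∫_{ℝ²} (1+|ξ|²)^t |F(ξ)|² dξ < ∞. -/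

import Mathlib

/-!
For `|ξ| > C₀` write the integrand as `(A - B)(1 + R) + B(R - R')`, with `A`, `B` the two values
of `h`. The Lipschitz bound on `h` and `|1 + R| ≤ K := 1 + c + c C₀^{-2γ}` bound the first term by
`K β |R - R'|`, and `|h| ≤ α` bounds the second by `α |R - R'|`, so
`|F(ξ)| ≤ c ‖α + K β‖_{L¹} |ξ|^{-2γ}` (`α, β ∈ L¹` being `L²` with bounded support). Hence
`(1 + |ξ|²)^t |F(ξ)|² ≲ (1 + |ξ|²)^{t - 2γ}`, which is integrable on `ℝ²` when `2 (2γ - t) > 2`.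
-/

open MeasureTheory Module Function
open scoped RealInnerProductSpace ENNReal

theorem MeasureTheory.MemLp.integrable_of_support_subset {α E : Type*} [MeasurableSpace α]
    {μ : Measure α} [NormedAddCommGroup E] {f : α → E} {p : ℝ≥0∞} {s : Set α}
    (hf : MemLp f p μ) (hp : 1 ≤ p) (hs : μ s ≠ ∞) (hfs : support f ⊆ s) :
    Integrable f μ := by
  have := isFiniteMeasure_restrict.2 hs
  exact (integrableOn_iff_integrable_of_support_subset hfs).1 ((hf.restrict s).integrable hp)

theorem norm_mul_one_add_sub_mul_one_add_le {𝕜 : Type*} [SeminormedRing 𝕜] {A B u v : 𝕜}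
    {a b δ K : ℝ} (hAB : ‖A - B‖ ≤ b * ‖u - v‖) (hB : ‖B‖ ≤ a) (huv : ‖u - v‖ ≤ δ)
    (hu : ‖1 + u‖ ≤ K) (hb : 0 ≤ b) :
    ‖A * (1 + u) - B * (1 + v)‖ ≤ (a + K * b) * δ := by
  have hδ : 0 ≤ δ := (norm_nonneg _).trans huv
  calc ‖A * (1 + u) - B * (1 + v)‖ = ‖(A - B) * (1 + u) + B * (u - v)‖ := by
        congr 1; noncomm_ring
    _ ≤ ‖A - B‖ * ‖1 + u‖ + ‖B‖ * ‖u - v‖ := norm_add_le_of_le (norm_mul_le _ _) (norm_mul_le _ _)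
    _ ≤ (b * δ) * K + a * δ := by
        gcongr
        · exact hAB.trans (by gcongr)
        · exact (norm_nonneg _).trans hB
    _ = (a + K * b) * δ := by ring

theorem norm_integral_exp_inner_mul_I_mul_le {E : Type*} [NormedAddCommGroup E]
    [InnerProductSpace ℝ E] [MeasurableSpace E] {μ : Measure E} {f : E → ℂ} {g : E → ℝ}
    (hg : Integrable g μ) (hfg : ∀ x, ‖f x‖ ≤ g x) (ξ : E) :
    ‖∫ x, Complex.exp (((⟪x, ξ⟫ : ℝ) : ℂ) * Complex.I) * f x ∂μ‖ ≤ ∫ x, g x ∂μ :=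
  norm_integral_le_of_norm_le hg <| .of_forall fun x => by
    rw [norm_mul, Complex.norm_exp_ofReal_mul_I, one_mul]; exact hfg x

theorem Real.rpow_neg_two_mul_le_mul_one_add_sq_rpow_neg {C r s : ℝ} (hC : 0 < C) (hCr : C ≤ r)
    (hs : 0 ≤ s) : r ^ (-(2 * s)) ≤ (1 + C⁻¹ ^ 2) ^ s * (1 + r ^ 2) ^ (-s) := by
  have hr : 0 < r := hC.trans_le hCr
  have hK : 0 < 1 + C⁻¹ ^ 2 := by positivity
  have h_sq : 1 + r ^ 2 ≤ (1 + C⁻¹ ^ 2) * r ^ 2 := by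
    have : 1 ≤ C⁻¹ ^ 2 * r ^ 2 := by
      rw [← mul_pow]
      exact one_le_pow₀ (by rw [← div_eq_inv_mul, one_le_div hC]; exact hCr)
    linarith
  calc r ^ (-(2 * s)) = (r ^ 2) ^ (-s) := by
        rw [← Real.rpow_natCast, ← Real.rpow_mul hr.le]; ring_nf
    _ = (1 + C⁻¹ ^ 2) ^ s * ((1 + C⁻¹ ^ 2) * r ^ 2) ^ (-s) := by
        rw [Real.mul_rpow hK.le (by positivity), ← mul_assoc, ← Real.rpow_add hK,
          add_neg_cancel, Real.rpow_zero, one_mul]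
    _ ≤ (1 + C⁻¹ ^ 2) ^ s * (1 + r ^ 2) ^ (-s) :=
        mul_le_mul_of_nonneg_left (Real.rpow_le_rpow_of_nonpos (by positivity) h_sq
          (neg_nonpos.2 hs)) (by positivity)

theorem integrable_one_add_norm_sq_rpow_mul_norm_sq {E G : Type*} [NormedAddCommGroup E]
    [NormedSpace ℝ E] [FiniteDimensional ℝ E] [MeasurableSpace E] [BorelSpace E]
    {μ : Measure E} [μ.IsAddHaarMeasure] [NormedAddCommGroup G] {F : E → G}
    (hF : AEStronglyMeasurable F μ) {C M s t : ℝ} (hC : 0 < C) (hs : 0 ≤ s)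
    (hst : (finrank ℝ E : ℝ) < 2 * (s - t))
    (hdecay : ∀ ξ, C < ‖ξ‖ → ‖F ξ‖ ≤ M * ‖ξ‖ ^ (-s)) (hzero : ∀ ξ, ‖ξ‖ ≤ C → F ξ = 0) :
    Integrable (fun ξ => (1 + ‖ξ‖ ^ 2) ^ t * ‖F ξ‖ ^ 2) μ := by
  set K := M ^ 2 * (1 + C⁻¹ ^ 2) ^ s
  have hmajor : Integrable (fun ξ : E => K * (1 + ‖ξ‖ ^ 2) ^ (t - s)) μ := by
    have := (integrable_rpow_neg_one_add_norm_sq (μ := μ) hst).const_mul K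
    convert this using 4; ring
  have hweight : Continuous fun ξ : E => (1 + ‖ξ‖ ^ 2) ^ t :=
    (by fun_prop : Continuous fun ξ : E => 1 + ‖ξ‖ ^ 2).rpow_const fun ξ => Or.inl (by positivity)
  refine hmajor.mono' (hweight.aestronglyMeasurable.mul (hF.norm.pow 2)) (.of_forall fun ξ => ?_)
  have hb : 0 < 1 + ‖ξ‖ ^ 2 := by positivity
  rw [Real.norm_of_nonneg (by positivity)]
  rcases le_or_gt ‖ξ‖ C with hξ | hξ
  · rw [hzero ξ hξ, norm_zero, zero_pow two_ne_zero, mul_zero]; positivity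
  have hξ0 : 0 < ‖ξ‖ := hC.trans hξ
  calc (1 + ‖ξ‖ ^ 2) ^ t * ‖F ξ‖ ^ 2 ≤ (1 + ‖ξ‖ ^ 2) ^ t * (M ^ 2 * ‖ξ‖ ^ (-(2 * s))) := by
        gcongr
        calc ‖F ξ‖ ^ 2 ≤ (M * ‖ξ‖ ^ (-s)) ^ 2 := by gcongr; exact hdecay ξ hξ
          _ = M ^ 2 * ‖ξ‖ ^ (-(2 * s)) := by
            rw [mul_pow, ← Real.rpow_natCast (‖ξ‖ ^ (-s)), ← Real.rpow_mul hξ0.le]; ring_nf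
    _ ≤ (1 + ‖ξ‖ ^ 2) ^ t * (M ^ 2 * ((1 + C⁻¹ ^ 2) ^ s * (1 + ‖ξ‖ ^ 2) ^ (-s))) := by
        gcongr; exact Real.rpow_neg_two_mul_le_mul_one_add_sq_rpow_neg hC hξ.le hs
    _ = K * (1 + ‖ξ‖ ^ 2) ^ (t - s) := by
        rw [sub_eq_add_neg, Real.rpow_add hb]; ring

theorem stmt6_general
    (Ω : Set (EuclideanSpace ℝ (Fin 2)))
    (hΩb : Bornology.IsBounded Ω)
    (α β : EuclideanSpace ℝ (Fin 2) → ℝ)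
    (hβ0 : ∀ x, 0 ≤ β x)
    (hαΩ : ∀ x ∉ Ω, α x = 0) (hβΩ : ∀ x ∉ Ω, β x = 0)
    (hαL2 : MemLp α 2 volume) (hβL2 : MemLp β 2 volume)
    (h : EuclideanSpace ℝ (Fin 2) → ℝ → ℂ)
    (hhα : ∀ x s, 0 ≤ s → ‖h x s‖ ≤ α x)
    (hhβ : ∀ (x : EuclideanSpace ℝ (Fin 2)) (a : ℝ), 0 < a → ∀ w₁ w₂ : ℂ,
      ‖h x (a * ‖1 + w₁‖) - h x (a * ‖1 + w₂‖)‖ ≤ β x * ‖w₁ - w₂‖)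
    (C₀ c γ : ℝ) (hC₀ : 0 < C₀) (hc : 0 < c) (hγ0 : 0 < γ)
    (R R' : EuclideanSpace ℝ (Fin 2) → EuclideanSpace ℝ (Fin 2) → ℂ)
    (e₀ : EuclideanSpace ℝ (Fin 2) → EuclideanSpace ℝ (Fin 2) → ℝ)
    (he₀ : ∀ x ξ, 0 < e₀ x ξ)
    (hRdiff : ∀ ξ : EuclideanSpace ℝ (Fin 2), C₀ < ‖ξ‖ →
      ∀ x, ‖R x ξ - R' x ξ‖ ≤ c * ‖ξ‖ ^ (-(2 * γ)))
    (hR'bdd : ∀ ξ : EuclideanSpace ℝ (Fin 2), C₀ < ‖ξ‖ → ∀ x, ‖R' x ξ‖ ≤ c)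
    (F : EuclideanSpace ℝ (Fin 2) → ℂ) (hFmeas : AEStronglyMeasurable F volume)
    (hF0 : ∀ ξ : EuclideanSpace ℝ (Fin 2), ‖ξ‖ ≤ C₀ → F ξ = 0)
    (hFdef : ∀ ξ : EuclideanSpace ℝ (Fin 2), C₀ < ‖ξ‖ →
      F ξ = ∫ x, Complex.exp (((⟪x, ξ⟫ : ℝ) : ℂ) * Complex.I) *
        (h x (e₀ x ξ * ‖1 + R x ξ‖) * (1 + R x ξ) -
          h x (e₀ x ξ * ‖1 + R' x ξ‖) * (1 + R' x ξ))) :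
    ∀ t : ℝ, t < 2 * γ - 1 →
      Integrable (fun ξ : EuclideanSpace ℝ (Fin 2) =>
        (1 + ‖ξ‖ ^ 2) ^ t * ‖F ξ‖ ^ 2) volume := by
  set K := 1 + c + c * C₀ ^ (-(2 * γ))
  have hΩ : volume Ω ≠ ∞ := hΩb.measure_lt_top.ne
  have hα : Integrable α := hαL2.integrable_of_support_subset one_le_two hΩ
    (support_subset_iff'.2 hαΩ)
  have hβ : Integrable β := hβL2.integrable_of_support_subset one_le_two hΩ
    (support_subset_iff'.2 hβΩ)
  have hdecay : ∀ ξ, C₀ < ‖ξ‖ →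
      ‖F ξ‖ ≤ (c * ∫ x, α x + K * β x) * ‖ξ‖ ^ (-(2 * γ)) := by
    intro ξ hξ
    have hR : ∀ x, ‖1 + R x ξ‖ ≤ K := fun x => by
      have hpow : ‖ξ‖ ^ (-(2 * γ)) ≤ C₀ ^ (-(2 * γ)) :=
        Real.rpow_le_rpow_of_nonpos hC₀ hξ.le (by linarith)
      calc ‖1 + R x ξ‖ ≤ 1 + ‖R' x ξ‖ + ‖R x ξ - R' x ξ‖ := by
            simpa [add_assoc] using norm_add₃_le (a := 1) (b := R' x ξ) (c := R x ξ - R' x ξ)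
        _ ≤ 1 + c + c * C₀ ^ (-(2 * γ)) := by
            gcongr
            exacts [hR'bdd ξ hξ x, (hRdiff ξ hξ x).trans (by gcongr)]
    rw [hFdef ξ hξ, mul_comm c, mul_assoc, ← integral_mul_const]
    refine norm_integral_exp_inner_mul_I_mul_le ((hα.add (hβ.const_mul K)).mul_const _)
      (fun x => ?_) ξ
    exact norm_mul_one_add_sub_mul_one_add_le (hhβ x _ (he₀ x ξ) _ _)
      (hhα x _ (by have := he₀ x ξ; positivity)) (hRdiff ξ hξ x) (hR x) (hβ0 x)
  intro t ht
  refine integrable_one_add_norm_sq_rpow_mul_norm_sq hFmeas hC₀ (by positivity) ?_ hdecay hF0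
  rw [finrank_euclideanSpace_fin]; push_cast; linarith

/-- Abstract form of Lemma 2: if for `|ξ| > C₀` the remainders satisfy
`sup_x |R(x,ξ) - R'(x,ξ)| ≤ c|ξ|^{-2γ}` and `sup_x |R'(x,ξ)| ≤ c`, then the
difference `F(ξ)` of the corresponding Born-type integrals (extended by `0` for
`|ξ| ≤ C₀`) satisfies `∫ (1+|ξ|²)^t |F(ξ)|² dξ < ∞` for every `t < 2γ - 1`. -/
theorem stmt6
    (Ω : Set (EuclideanSpace ℝ (Fin 2)))
    (hΩb : Bornology.IsBounded Ω) (hΩm : MeasurableSet Ω)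
    (α β : EuclideanSpace ℝ (Fin 2) → ℝ)
    (hα0 : ∀ x, 0 ≤ α x) (hβ0 : ∀ x, 0 ≤ β x)
    (hαΩ : ∀ x ∉ Ω, α x = 0) (hβΩ : ∀ x ∉ Ω, β x = 0)
    (hαL2 : MemLp α 2 volume) (hβL2 : MemLp β 2 volume)
    (hαpos : eLpNorm α 2 volume ≠ 0) (hβpos : eLpNorm β 2 volume ≠ 0)
    (h : EuclideanSpace ℝ (Fin 2) → ℝ → ℂ)
    (hhα : ∀ x s, 0 ≤ s → ‖h x s‖ ≤ α x)
    (hhβ : ∀ (x : EuclideanSpace ℝ (Fin 2)) (a : ℝ), 0 < a → ∀ w₁ w₂ : ℂ,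
      ‖h x (a * ‖1 + w₁‖) - h x (a * ‖1 + w₂‖)‖ ≤ β x * ‖w₁ - w₂‖)
    (C₀ c γ : ℝ) (hC₀ : 0 < C₀) (hc : 0 < c) (hγ0 : 0 < γ) (hγ1 : γ < 1)
    (R R' : EuclideanSpace ℝ (Fin 2) → EuclideanSpace ℝ (Fin 2) → ℂ)
    (e₀ : EuclideanSpace ℝ (Fin 2) → EuclideanSpace ℝ (Fin 2) → ℝ)
    (he₀ : ∀ x ξ, 0 < e₀ x ξ)
    (hRdiff : ∀ ξ : EuclideanSpace ℝ (Fin 2), C₀ < ‖ξ‖ →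
      ∀ x, ‖R x ξ - R' x ξ‖ ≤ c * ‖ξ‖ ^ (-(2 * γ)))
    (hR'bdd : ∀ ξ : EuclideanSpace ℝ (Fin 2), C₀ < ‖ξ‖ → ∀ x, ‖R' x ξ‖ ≤ c)
    (hRmeas : ∀ ξ : EuclideanSpace ℝ (Fin 2), C₀ < ‖ξ‖ →
      AEStronglyMeasurable (fun x => h x (e₀ x ξ * ‖1 + R x ξ‖) * (1 + R x ξ)) volume)
    (hR'meas : ∀ ξ : EuclideanSpace ℝ (Fin 2), C₀ < ‖ξ‖ →
      AEStronglyMeasurable (fun x => h x (e₀ x ξ * ‖1 + R' x ξ‖) * (1 + R' x ξ)) volume)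
    (F : EuclideanSpace ℝ (Fin 2) → ℂ) (hFmeas : AEStronglyMeasurable F volume)
    (hF0 : ∀ ξ : EuclideanSpace ℝ (Fin 2), ‖ξ‖ ≤ C₀ → F ξ = 0)
    (hFdef : ∀ ξ : EuclideanSpace ℝ (Fin 2), C₀ < ‖ξ‖ →
      F ξ = ∫ x, Complex.exp (((⟪x, ξ⟫ : ℝ) : ℂ) * Complex.I) *
        (h x (e₀ x ξ * ‖1 + R x ξ‖) * (1 + R x ξ) -
          h x (e₀ x ξ * ‖1 + R' x ξ‖) * (1 + R' x ξ))) :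
    ∀ t : ℝ, t < 2 * γ - 1 →
      Integrable (fun ξ : EuclideanSpace ℝ (Fin 2) =>
        (1 + ‖ξ‖ ^ 2) ^ t * ‖F ξ‖ ^ 2) volume :=
  stmt6_general Ω hΩb α β hβ0 hαΩ hβΩ hαL2 hβL2 h hhα hhβ C₀ c γ hC₀ hc hγ0 R R' e₀ he₀ hRdiff
    hR'bdd F hFmeas hF0 hFdef
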